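/- (Complementarity along optimal trajectories.) In the PWA optimal control setting with continuous running costs L_i and continuous terminal cost L_T, suppose v : ℝⁿ → ℝ is continuously differentiable with ∇v(y) · (A_i y + a_i + B_i w) + L_i(y,w) ≥ 0 on X_i × U for every i and v ≤ L_T on X_T. If an admissible process (T, u, x) attains the bound, i.e. its cost L_T(x(T)) + Σᵢ ∫₀ᵀ L_i(x(t),u(t)) 1_{X_i}(x(t)) dt equals v(x(0)), then v(x(T)) = L_T(x(T)) and, for almost every t ∈ [0,T], ∇v(x(t)) · (A_i x(t) + a_i + B_i u(t)) + L_i(x(t),u(t)) = 0 for the index i with x(t) ∈ X_i. -/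

import Mathlib

open MeasureTheory Set
open scoped RealInnerProductSpace

/-- An admissible process for the piecewise-affine optimal control problem with cells `X i`,
control set `U`, dynamics `ẋ = A i x + a i + B i u` on `X i`, and terminal set `XT`.
The trajectory `x` is absolutely continuous, encoded as the integral of an integrable
velocity `d` that agrees a.e. with the piecewise-affine vector field. -/
structure PWAProcess (n m r : ℕ)
    (X : Fin r → Set (EuclideanSpace ℝ (Fin n)))
    (U : Set (EuclideanSpace ℝ (Fin m)))
    (A : Fin r → (EuclideanSpace ℝ (Fin n) →L[ℝ] EuclideanSpace ℝ (Fin n)))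
    (a : Fin r → EuclideanSpace ℝ (Fin n))
    (B : Fin r → (EuclideanSpace ℝ (Fin m) →L[ℝ] EuclideanSpace ℝ (Fin n)))
    (XT : Set (EuclideanSpace ℝ (Fin n))) where
  /-- terminal time -/
  T : ℝ
  T_pos : 0 < T
  /-- control -/
  u : ℝ → EuclideanSpace ℝ (Fin m)
  u_meas : Measurable u
  u_mem : ∀ t ∈ Icc (0 : ℝ) T, u t ∈ U
  /-- state trajectory -/
  x : ℝ → EuclideanSpace ℝ (Fin n)
  /-- a.e. derivative of the trajectory -/
  d : ℝ → EuclideanSpace ℝ (Fin n)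
  d_meas : Measurable d
  d_intble : IntegrableOn d (Icc (0 : ℝ) T)
  /-- absolute continuity: `x` is the integral of its a.e. derivative -/
  x_eq : ∀ t ∈ Icc (0 : ℝ) T, x t = x 0 + ∫ s in (0 : ℝ)..t, d s
  x_mem : ∀ t ∈ Icc (0 : ℝ) T, x t ∈ ⋃ i, X i
  /-- the ODE holds for almost every time -/
  ode : ∀ᵐ t ∂(volume.restrict (Icc (0 : ℝ) T)),
      ∀ i, x t ∈ X i → d t = A i (x t) + a i + B i (u t)
  /-- times spent on overlaps of cells are negligible -/
  overlap : volume {t ∈ Icc (0 : ℝ) T | ∃ i j, i ≠ j ∧ x t ∈ X i ∧ x t ∈ X j} = 0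
  terminal : x T ∈ XT

/-- The `i`-th local occupation measure of an admissible process:
`μ i (A) = Leb {t ∈ [0,T] : x t ∈ X i and (x t, u t) ∈ A}`. -/
noncomputable def PWAProcess.occ {n m r : ℕ}
    {X : Fin r → Set (EuclideanSpace ℝ (Fin n))}
    {U : Set (EuclideanSpace ℝ (Fin m))}
    {A : Fin r → (EuclideanSpace ℝ (Fin n) →L[ℝ] EuclideanSpace ℝ (Fin n))}
    {a : Fin r → EuclideanSpace ℝ (Fin n)}
    {B : Fin r → (EuclideanSpace ℝ (Fin m) →L[ℝ] EuclideanSpace ℝ (Fin n))}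
    {XT : Set (EuclideanSpace ℝ (Fin n))}
    (P : PWAProcess n m r X U A a B XT) (i : Fin r) :
    Measure (EuclideanSpace ℝ (Fin n) × EuclideanSpace ℝ (Fin m)) :=
  Measure.map (fun t => (P.x t, P.u t))
    (volume.restrict {t | t ∈ Icc (0 : ℝ) P.T ∧ P.x t ∈ X i})

/-!
Along the process, `t ↦ v (x t)` is absolutely continuous (`v` is Lipschitz on the compact range
of `x`), so the fundamental theorem of calculus gives
`v (x T) - v (x 0) = ∫₀ᵀ ⟪∇v (x t), ẋ t⟫`. Adding the running cost and using optimality, the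
Hamiltonian `H t = ⟪∇v (x t), ẋ t⟫ + L_i (x t, u t)` of the active cell `i` integrates to
`v (x T) - L_T (x T) ≤ 0`, while `H ≥ 0` a.e. by the subsolution inequality. Hence `∫ H = 0`,
so `H = 0` a.e. and `v (x T) = L_T (x T)`.
-/

section ChainRule

variable {X Y : Type*} [PseudoMetricSpace X] [PseudoMetricSpace Y] {a b : ℝ}

theorem AbsolutelyContinuousOnInterval.of_dist_le_mul {f : ℝ → X} {g : ℝ → Y}
    (hg : AbsolutelyContinuousOnInterval g a b) (K : ℝ)
    (hfg : ∀ s ∈ uIcc a b, ∀ t ∈ uIcc a b, dist (f s) (f t) ≤ K * dist (g s) (g t)) :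
    AbsolutelyContinuousOnInterval f a b := by
  rw [absolutelyContinuousOnInterval_iff] at hg ⊢
  intro ε hε
  obtain ⟨δ, hδ, hg⟩ := hg (ε / (|K| + 1)) (by positivity)
  refine ⟨δ, hδ, fun E hE hEδ ↦ ?_⟩
  calc ∑ i ∈ Finset.range E.1, dist (f (E.2 i).1) (f (E.2 i).2)
      ≤ ∑ i ∈ Finset.range E.1, |K| * dist (g (E.2 i).1) (g (E.2 i).2) := by
        refine Finset.sum_le_sum fun i hi ↦ (hfg _ (hE.1 i hi).1 _ (hE.1 i hi).2).trans ?_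
        gcongr
        exact le_abs_self K
    _ = |K| * ∑ i ∈ Finset.range E.1, dist (g (E.2 i).1) (g (E.2 i).2) := by
        rw [Finset.mul_sum]
    _ ≤ |K| * (ε / (|K| + 1)) := by gcongr; exact (hg E hE hEδ).le
    _ < (|K| + 1) * (ε / (|K| + 1)) := by gcongr; linarith
    _ = ε := by field_simp

theorem LipschitzOnWith.absolutelyContinuousOnInterval_comp {v : X → Y} {x : ℝ → X}
    {s : Set X} {K : NNReal} (hv : LipschitzOnWith K v s)
    (hx : AbsolutelyContinuousOnInterval x a b) (hxs : MapsTo x (uIcc a b) s) :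
    AbsolutelyContinuousOnInterval (v ∘ x) a b :=
  hx.of_dist_le_mul K fun _ hs _ ht ↦ hv.dist_le_mul _ (hxs hs) _ (hxs ht)

variable {E : Type*} [NormedAddCommGroup E] [NormedSpace ℝ E] {x d : ℝ → E}

theorem ContDiff.absolutelyContinuousOnInterval_comp {F : Type*} [NormedAddCommGroup F]
    [NormedSpace ℝ F] {v : E → F} (hv : ContDiff ℝ 1 v) {x : ℝ → E}
    (hx : AbsolutelyContinuousOnInterval x a b) :
    AbsolutelyContinuousOnInterval (v ∘ x) a b := by
  obtain ⟨K, hK⟩ := hv.locallyLipschitz.locallyLipschitzOn.exists_lipschitzOnWith_of_compact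
    (isCompact_uIcc.image_of_continuousOn hx.continuousOn)
  exact hK.absolutelyContinuousOnInterval_comp hx (mapsTo_image x _)

theorem absolutelyContinuousOnInterval_of_eq_integral (hd : IntervalIntegrable d volume a b)
    (hx : ∀ t ∈ uIcc a b, x t = x a + ∫ s in a..t, d s) :
    AbsolutelyContinuousOnInterval x a b := by
  refine (hd.norm.absolutelyContinuousOnInterval_intervalIntegral (c := a)
    left_mem_uIcc).of_dist_le_mul 1 fun s hs t ht ↦ ?_
  have hsub (t : ℝ) (ht : t ∈ uIcc a b) := hd.mono_set (uIcc_subset_uIcc left_mem_uIcc ht)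
  rw [one_mul, dist_eq_norm, dist_eq_norm, hx s hs, hx t ht, add_sub_add_left_eq_sub,
    intervalIntegral.integral_interval_sub_left (hsub s hs) (hsub t ht),
    intervalIntegral.integral_interval_sub_left (hsub s hs).norm (hsub t ht).norm, Real.norm_eq_abs]
  exact intervalIntegral.norm_integral_le_abs_integral_norm

variable [CompleteSpace E]

theorem ae_hasDerivAt_of_eq_integral (hd : IntervalIntegrable d volume a b)
    (hx : ∀ t ∈ uIcc a b, x t = x a + ∫ s in a..t, d s) :
    ∀ᵐ t, t ∈ uIcc a b → HasDerivAt x (d t) t := by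
  have hne (c : ℝ) : ∀ᵐ t, t ≠ c := by simp [ae_iff, measure_singleton]
  filter_upwards [hd.ae_hasDerivAt_integral, hne a, hne b] with t hderiv hta htb ht
  have ht' : t ∈ uIoo a b := by
    rw [uIcc, mem_Icc] at ht
    exact ⟨lt_of_le_of_ne ht.1 (by grind), lt_of_le_of_ne ht.2 (by grind)⟩
  refine ((hderiv ht a left_mem_uIcc).const_add (x a)).congr_of_eventuallyEq ?_
  filter_upwards [isOpen_Ioo.mem_nhds ht'] with s hs using hx s (uIoo_subset_uIcc_self hs)

variable {v : E → ℝ}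

theorem ae_deriv_comp_eq_fderiv_apply (hv : ContDiff ℝ 1 v) (hd : IntervalIntegrable d volume a b)
    (hx : ∀ t ∈ uIcc a b, x t = x a + ∫ s in a..t, d s) :
    ∀ᵐ t, t ∈ uIcc a b → deriv (v ∘ x) t = fderiv ℝ v (x t) (d t) := by
  filter_upwards [ae_hasDerivAt_of_eq_integral hd hx] with t hxt ht
  exact ((hv.differentiable one_ne_zero (x t)).hasFDerivAt.comp_hasDerivAt t (hxt ht)).deriv

theorem intervalIntegrable_fderiv_comp (hv : ContDiff ℝ 1 v) (hd : IntervalIntegrable d volume a b)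
    (hx : ∀ t ∈ uIcc a b, x t = x a + ∫ s in a..t, d s) :
    IntervalIntegrable (fun t ↦ fderiv ℝ v (x t) (d t)) volume a b := by
  refine (hv.absolutelyContinuousOnInterval_comp
    (absolutelyContinuousOnInterval_of_eq_integral hd hx)).intervalIntegrable_deriv.congr_ae ?_
  filter_upwards [ae_restrict_mem measurableSet_uIoc,
    ae_restrict_of_ae (ae_deriv_comp_eq_fderiv_apply hv hd hx)] with t hmem ht
  exact ht (uIoc_subset_uIcc hmem)

theorem integral_fderiv_comp_eq_sub (hv : ContDiff ℝ 1 v) (hd : IntervalIntegrable d volume a b)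
    (hx : ∀ t ∈ uIcc a b, x t = x a + ∫ s in a..t, d s) :
    ∫ t in a..b, fderiv ℝ v (x t) (d t) = v (x b) - v (x a) :=
  calc ∫ t in a..b, fderiv ℝ v (x t) (d t) = ∫ t in a..b, deriv (v ∘ x) t := by
        refine intervalIntegral.integral_congr_ae ?_
        filter_upwards [ae_deriv_comp_eq_fderiv_apply hv hd hx] with t ht hmem
        exact (ht (uIoc_subset_uIcc hmem)).symm
    _ = v (x b) - v (x a) := (hv.absolutelyContinuousOnInterval_comp
        (absolutelyContinuousOnInterval_of_eq_integral hd hx)).integral_deriv_eq_sub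

end ChainRule

namespace PWAProcess

variable {n m r : ℕ} {X : Fin r → Set (EuclideanSpace ℝ (Fin n))}
  {U : Set (EuclideanSpace ℝ (Fin m))}
  {A : Fin r → (EuclideanSpace ℝ (Fin n) →L[ℝ] EuclideanSpace ℝ (Fin n))}
  {a : Fin r → EuclideanSpace ℝ (Fin n)}
  {B : Fin r → (EuclideanSpace ℝ (Fin m) →L[ℝ] EuclideanSpace ℝ (Fin n))}
  {XT : Set (EuclideanSpace ℝ (Fin n))} (P : PWAProcess n m r X U A a B XT)

theorem intervalIntegrable_d : IntervalIntegrable P.d volume 0 P.T :=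
  (intervalIntegrable_iff_integrableOn_Icc_of_le P.T_pos.le).mpr P.d_intble

theorem x_eq_of_mem_uIcc : ∀ t ∈ uIcc 0 P.T, P.x t = P.x 0 + ∫ s in (0 : ℝ)..t, P.d s := by
  rw [uIcc_of_le P.T_pos.le]
  exact P.x_eq

theorem continuousOn_x : ContinuousOn P.x (Icc 0 P.T) := by
  simpa [uIcc_of_le P.T_pos.le] using
    (absolutelyContinuousOnInterval_of_eq_integral P.intervalIntegrable_d
      P.x_eq_of_mem_uIcc).continuousOn

theorem integral_inner_gradient_eq_sub {v : EuclideanSpace ℝ (Fin n) → ℝ} (hv : ContDiff ℝ 1 v) :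
    ∫ t in (0 : ℝ)..P.T, ⟪gradient v (P.x t), P.d t⟫ = v (P.x P.T) - v (P.x 0) := by
  simp_rw [inner_gradient_left]
  exact integral_fderiv_comp_eq_sub hv P.intervalIntegrable_d P.x_eq_of_mem_uIcc

theorem integrableOn_inner_gradient {v : EuclideanSpace ℝ (Fin n) → ℝ} (hv : ContDiff ℝ 1 v) :
    IntegrableOn (fun t ↦ ⟪gradient v (P.x t), P.d t⟫) (Icc 0 P.T) := by
  simp_rw [inner_gradient_left]
  exact (intervalIntegrable_iff_integrableOn_Icc_of_le P.T_pos.le).mp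
    (intervalIntegrable_fderiv_comp hv P.intervalIntegrable_d P.x_eq_of_mem_uIcc)

theorem integrableOn_mul_indicator {ℓ : EuclideanSpace ℝ (Fin n) × EuclideanSpace ℝ (Fin m) → ℝ}
    (hℓ : Continuous ℓ) (hU : IsCompact U) {S : Set (EuclideanSpace ℝ (Fin n))}
    (hS : MeasurableSet S) :
    IntegrableOn (fun t ↦ ℓ (P.x t, P.u t) * S.indicator (fun _ ↦ (1 : ℝ)) (P.x t))
      (Icc 0 P.T) := by
  obtain ⟨C, hC⟩ := ((isCompact_Icc.image_of_continuousOn P.continuousOn_x).prod hU)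
    |>.exists_bound_of_continuousOn hℓ.continuousOn
  have hx_meas := P.continuousOn_x.aemeasurable (μ := volume) measurableSet_Icc
  refine Integrable.of_bound (C := C) ?_ ?_
  · exact (hℓ.comp_aestronglyMeasurable (hx_meas.aestronglyMeasurable.prodMk
      P.u_meas.aestronglyMeasurable)).mul
      ((measurable_const.indicator hS).comp_aemeasurable hx_meas).aestronglyMeasurable
  · filter_upwards [ae_restrict_mem measurableSet_Icc] with t ht
    calc ‖ℓ (P.x t, P.u t) * S.indicator (fun _ ↦ (1 : ℝ)) (P.x t)‖
        ≤ ‖ℓ (P.x t, P.u t)‖ * 1 := by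
          rw [norm_mul]
          gcongr
          exact (norm_indicator_le_norm_self _ _).trans norm_one.le
      _ ≤ C := by simpa using hC _ ⟨mem_image_of_mem _ ht, P.u_mem t ht⟩

theorem ae_eq_of_mem_of_mem :
    ∀ᵐ t ∂volume.restrict (Icc 0 P.T), ∀ i j, P.x t ∈ X i → P.x t ∈ X j → i = j := by
  filter_upwards [ae_restrict_of_ae (measure_eq_zero_iff_ae_notMem.mp P.overlap),
    ae_restrict_mem measurableSet_Icc] with t ht hmem i j hi hj
  by_contra hij
  exact ht ⟨hmem, i, j, hij, hi, hj⟩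

theorem ae_inner_add_sum_mul_indicator_eq (p : EuclideanSpace ℝ (Fin n) → EuclideanSpace ℝ (Fin n))
    (L : Fin r → (EuclideanSpace ℝ (Fin n) × EuclideanSpace ℝ (Fin m) → ℝ)) :
    ∀ᵐ t ∂volume.restrict (Icc 0 P.T), ∀ i, P.x t ∈ X i →
      ⟪p (P.x t), P.d t⟫ + ∑ j, L j (P.x t, P.u t) * (X j).indicator (fun _ ↦ (1 : ℝ)) (P.x t)
        = ⟪p (P.x t), A i (P.x t) + a i + B i (P.u t)⟫ + L i (P.x t, P.u t) := by
  filter_upwards [P.ode, P.ae_eq_of_mem_of_mem] with t hode huniq i hi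
  rw [hode i hi, Finset.sum_eq_single i (fun j _ hji ↦ ?_) (by simp)]
  · simp [hi]
  · simp [indicator_of_notMem fun hj ↦ hji (huniq j i hj hi)]

theorem integrableOn_inner_gradient_add_sum_mul_indicator {v : EuclideanSpace ℝ (Fin n) → ℝ}
    (hv : ContDiff ℝ 1 v) (L : Fin r → (EuclideanSpace ℝ (Fin n) × EuclideanSpace ℝ (Fin m) → ℝ))
    (hL : ∀ i, Continuous (L i)) (hU : IsCompact U) (hX : ∀ i, MeasurableSet (X i)) :
    IntegrableOn (fun t ↦ ⟪gradient v (P.x t), P.d t⟫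
      + ∑ i, L i (P.x t, P.u t) * (X i).indicator (fun _ ↦ (1 : ℝ)) (P.x t)) (Icc 0 P.T) :=
  (P.integrableOn_inner_gradient hv).add
    (integrable_finsetSum _ fun i _ ↦ P.integrableOn_mul_indicator (hL i) hU (hX i))

theorem setIntegral_inner_gradient_add_sum_mul_indicator {v : EuclideanSpace ℝ (Fin n) → ℝ}
    (hv : ContDiff ℝ 1 v) (L : Fin r → (EuclideanSpace ℝ (Fin n) × EuclideanSpace ℝ (Fin m) → ℝ))
    (hL : ∀ i, Continuous (L i)) (hU : IsCompact U) (hX : ∀ i, MeasurableSet (X i)) :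
    ∫ t in Icc 0 P.T, (⟪gradient v (P.x t), P.d t⟫
      + ∑ i, L i (P.x t, P.u t) * (X i).indicator (fun _ ↦ (1 : ℝ)) (P.x t))
      = v (P.x P.T) - v (P.x 0) + ∑ i, ∫ t in (0 : ℝ)..P.T,
          L i (P.x t, P.u t) * (X i).indicator (fun _ ↦ (1 : ℝ)) (P.x t) := by
  have hcost_int (i : Fin r) := P.integrableOn_mul_indicator (hL i) hU (hX i)
  have hIcc (f : ℝ → ℝ) : ∫ t in Icc 0 P.T, f t = ∫ t in (0 : ℝ)..P.T, f t := by
    rw [intervalIntegral.integral_of_le P.T_pos.le, integral_Icc_eq_integral_Ioc]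
  rw [integral_add (P.integrableOn_inner_gradient hv)
    (integrable_finsetSum _ fun i _ ↦ hcost_int i), integral_finsetSum _ fun i _ ↦ hcost_int i]
  simp only [hIcc, P.integral_inner_gradient_eq_sub hv]

end PWAProcess

theorem pwa_complementarity_general {n m r : ℕ}
    (X : Fin r → Set (EuclideanSpace ℝ (Fin n))) (hX : ∀ i, IsCompact (X i))
    (U : Set (EuclideanSpace ℝ (Fin m))) (hU : IsCompact U)
    (A : Fin r → (EuclideanSpace ℝ (Fin n) →L[ℝ] EuclideanSpace ℝ (Fin n)))
    (a : Fin r → EuclideanSpace ℝ (Fin n))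
    (B : Fin r → (EuclideanSpace ℝ (Fin m) →L[ℝ] EuclideanSpace ℝ (Fin n)))
    (XT : Set (EuclideanSpace ℝ (Fin n)))
    (L : Fin r → (EuclideanSpace ℝ (Fin n) × EuclideanSpace ℝ (Fin m) → ℝ))
    (hL : ∀ i, Continuous (L i))
    (LT : EuclideanSpace ℝ (Fin n) → ℝ)
    (v : EuclideanSpace ℝ (Fin n) → ℝ) (hv : ContDiff ℝ 1 v)
    (hpos : ∀ i, ∀ y ∈ X i, ∀ w ∈ U,
      0 ≤ ⟪gradient v y, A i y + a i + B i w⟫ + L i (y, w))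
    (hterm : ∀ y ∈ XT, v y ≤ LT y)
    (P : PWAProcess n m r X U A a B XT)
    (hopt : LT (P.x P.T) + ∑ i, ∫ t in (0 : ℝ)..P.T,
        L i (P.x t, P.u t) * (X i).indicator (fun _ => (1 : ℝ)) (P.x t) = v (P.x 0)) :
    v (P.x P.T) = LT (P.x P.T)
    ∧ ∀ᵐ t ∂(volume.restrict (Icc (0 : ℝ) P.T)), ∀ i, P.x t ∈ X i →
        ⟪gradient v (P.x t), A i (P.x t) + a i + B i (P.u t)⟫ + L i (P.x t, P.u t) = 0 := by
  set μ := volume.restrict (Icc (0 : ℝ) P.T)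
  set H : ℝ → ℝ := fun t ↦ ⟪gradient v (P.x t), P.d t⟫
    + ∑ i, L i (P.x t, P.u t) * (X i).indicator (fun _ ↦ (1 : ℝ)) (P.x t)
  have hH_eq : ∀ᵐ t ∂μ, ∀ i, P.x t ∈ X i →
      H t = ⟪gradient v (P.x t), A i (P.x t) + a i + B i (P.u t)⟫ + L i (P.x t, P.u t) :=
    P.ae_inner_add_sum_mul_indicator_eq (gradient v) L
  have hH_nonneg : 0 ≤ᵐ[μ] H := by
    filter_upwards [hH_eq, ae_restrict_mem measurableSet_Icc] with t hHt ht
    obtain ⟨i, hi⟩ := mem_iUnion.mp (P.x_mem t ht)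
    rw [Pi.zero_apply, hHt i hi]
    exact hpos i _ hi _ (P.u_mem t ht)
  have hX_meas (i : Fin r) : MeasurableSet (X i) := (hX i).isClosed.measurableSet
  have hH_integral : ∫ t, H t ∂μ = v (P.x P.T) - LT (P.x P.T) := by
    rw [P.setIntegral_inner_gradient_add_sum_mul_indicator hv L hL hU hX_meas]
    linarith
  have hH_integral_zero : ∫ t, H t ∂μ = 0 :=
    (hH_integral ▸ sub_nonpos.mpr (hterm _ P.terminal)).antisymm
      (integral_nonneg_of_ae hH_nonneg)
  have hH_zero : H =ᵐ[μ] 0 :=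
    (integral_eq_zero_iff_of_nonneg_ae hH_nonneg
      (P.integrableOn_inner_gradient_add_sum_mul_indicator hv L hL hU hX_meas)).mp hH_integral_zero
  refine ⟨by linarith, ?_⟩
  filter_upwards [hH_eq, hH_zero] with t hHt hHt_zero i hi
  rw [← hHt i hi]
  exact hHt_zero

/-- complementarity along optimal trajectories. If `v` is a `C¹` subsolution
of the HJB system and an admissible process attains the bound `v(x(0))`, then
`v(x(T)) = L_T(x(T))` and, for almost every `t ∈ [0,T]`, the Hamiltonian vanishes:
`⟪∇v(x(t)), Aᵢ x(t) + aᵢ + Bᵢ u(t)⟫ + Lᵢ(x(t),u(t)) = 0` for the index `i` with `x(t) ∈ Xᵢ`. -/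
theorem pwa_complementarity {n m r : ℕ}
    (X : Fin r → Set (EuclideanSpace ℝ (Fin n))) (hX : ∀ i, IsCompact (X i))
    (hdisj : ∀ i j, i ≠ j → Disjoint (interior (X i)) (interior (X j)))
    (U : Set (EuclideanSpace ℝ (Fin m))) (hU : IsCompact U)
    (A : Fin r → (EuclideanSpace ℝ (Fin n) →L[ℝ] EuclideanSpace ℝ (Fin n)))
    (a : Fin r → EuclideanSpace ℝ (Fin n))
    (B : Fin r → (EuclideanSpace ℝ (Fin m) →L[ℝ] EuclideanSpace ℝ (Fin n)))
    (XT : Set (EuclideanSpace ℝ (Fin n))) (hXT : IsCompact XT)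
    (L : Fin r → (EuclideanSpace ℝ (Fin n) × EuclideanSpace ℝ (Fin m) → ℝ))
    (hL : ∀ i, Continuous (L i))
    (LT : EuclideanSpace ℝ (Fin n) → ℝ) (hLT : Continuous LT)
    (v : EuclideanSpace ℝ (Fin n) → ℝ) (hv : ContDiff ℝ 1 v)
    (hpos : ∀ i, ∀ y ∈ X i, ∀ w ∈ U,
      0 ≤ ⟪gradient v y, A i y + a i + B i w⟫ + L i (y, w))
    (hterm : ∀ y ∈ XT, v y ≤ LT y)
    (P : PWAProcess n m r X U A a B XT)
    (hopt : LT (P.x P.T) + ∑ i, ∫ t in (0 : ℝ)..P.T,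
        L i (P.x t, P.u t) * (X i).indicator (fun _ => (1 : ℝ)) (P.x t) = v (P.x 0)) :
    v (P.x P.T) = LT (P.x P.T)
    ∧ ∀ᵐ t ∂(volume.restrict (Icc (0 : ℝ) P.T)), ∀ i, P.x t ∈ X i →
        ⟪gradient v (P.x t), A i (P.x t) + a i + B i (P.u t)⟫ + L i (P.x t, P.u t) = 0 :=
  pwa_complementarity_general X hX U hU A a B XT L hL LT v hv hpos hterm P hopt
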